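/- Let n ≥ 1 and x = (x_1,…,x_n) ∈ ℕ^n. Then the number of x-parking functions equals n! · ∑_{T ∈ RPT(n+1)} ∏_{i=1}^{n} x_i^{outdeg_T(i−1)} / (outdeg_T(i−1)!) (an equality of rational numbers; the right-hand side is in fact an integer). -/

import Mathlib

/-!
Cut `[0, x_1 + ⋯ + x_n)` into consecutive blocks of lengths `x_1, …, x_n` and let `ℓ i` be the
block containing `α i`. Then `α` is an `x`-parking function iff `ℓ` is an ordinary parking function,
and `∏ x_{ℓ i}` functions `α` share the same `ℓ`. This weight depends only on the fibre sizes
`d_j = #ℓ⁻¹(j)`; `ℓ` is parking iff `d` is a Łukasiewicz vector (`d_0 + ⋯ + d_j ≥ j + 1`), and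
`n! / ∏ d_j!` functions `ℓ` have fibre sizes `d`. Finally, the outdegree sequence is a bijection
from plane trees onto Łukasiewicz vectors summing to `n`: the parent of a vertex `v` is the last
`u < v` at which the Łukasiewicz path `w ↦ d_0 + ⋯ + d_{w-1} - w` is at most its value at `v`.
-/

/-- `α` is an `x`-parking function of length `n` (`x` given 0-based: `x k` is `x_{k+1}`). -/
def IsVPF (n : ℕ) (x : ℕ → ℕ) (α : Fin n → ℕ) : Prop :=
  ∀ j : Fin n, (j : ℕ) + 1 ≤
    (Finset.univ.filter fun i => α i < ∑ k ∈ Finset.range ((j : ℕ) + 1), x k).card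

/-- A rooted plane tree on `n+1` vertices `{0,1,…,n}` with root `0`, encoded by its parent
function. -/
structure PlaneTree (n : ℕ) where
  par : Fin (n + 1) → Fin (n + 1)
  par_zero : par 0 = 0
  par_lt : ∀ v : Fin (n + 1), v ≠ 0 → par v < v
  plane : ∀ i j k : Fin (n + 1), 0 < i → i < j → j < k →
    (∃ m, par^[m] k = i) → (∃ m, par^[m] j = i)

/-- The number of children of vertex `i` in `T`. -/
def outdeg {n : ℕ} (T : PlaneTree n) (i : Fin (n + 1)) : ℕ :=
  (Finset.univ.filter fun j => j ≠ 0 ∧ T.par j = i).card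

open Finset

section ParkingLevels

variable {n : ℕ} {x : ℕ → ℕ}

def IsParking (ℓ : Fin n → Fin n) : Prop :=
  ∀ j : Fin n, (j : ℕ) + 1 ≤ #{i | ℓ i ≤ j}

instance : DecidablePred (IsParking (n := n)) := fun _ => by
  unfold IsParking; infer_instance

lemma sum_range_mono (x : ℕ → ℕ) : Monotone fun m => ∑ k ∈ range m, x k :=
  fun _ _ h => sum_mono_set x (range_mono h)

lemma lt_sum_range_succ_iff {a j : ℕ}
    (ha : a ∈ Ico (∑ k ∈ range j, x k) (∑ k ∈ range (j + 1), x k)) (k : ℕ) :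
    a < ∑ k ∈ range (k + 1), x k ↔ j ≤ k := by
  rw [mem_Ico] at ha
  constructor
  · intro h
    by_contra! hkj
    exact (h.trans_le (sum_range_mono x hkj)).not_ge ha.1
  · exact fun hjk => ha.2.trans_le (sum_range_mono x (Nat.succ_le_succ hjk))

lemma exists_mem_Ico_sum_range {a m : ℕ} (ha : a < ∑ k ∈ range m, x k) :
    ∃ j < m, a ∈ Ico (∑ k ∈ range j, x k) (∑ k ∈ range (j + 1), x k) := by
  induction m with
  | zero => simp at ha
  | succ m ih =>
    by_cases h : a < ∑ k ∈ range m, x k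
    · obtain ⟨j, hj, hmem⟩ := ih h
      exact ⟨j, hj.trans m.lt_succ_self, hmem⟩
    · exact ⟨m, m.lt_succ_self, mem_Ico.2 ⟨not_lt.1 h, ha⟩⟩

def levelBox (x : ℕ → ℕ) (ℓ : Fin n → Fin n) : Finset (Fin n → ℕ) :=
  Fintype.piFinset fun i => Ico (∑ k ∈ range (ℓ i), x k) (∑ k ∈ range (ℓ i + 1), x k)

lemma card_levelBox (ℓ : Fin n → Fin n) : #(levelBox x ℓ) = ∏ i, x (ℓ i) := by
  simp [levelBox, Fintype.card_piFinset, sum_range_succ]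

lemma isVPF_iff_isParking {α : Fin n → ℕ} {ℓ : Fin n → Fin n} (hα : α ∈ levelBox x ℓ) :
    IsVPF n x α ↔ IsParking ℓ := by
  rw [levelBox, Fintype.mem_piFinset] at hα
  have hfilter (j : Fin n) :
      ({i | α i < ∑ k ∈ range (j + 1), x k} : Finset (Fin n)) = ({i | ℓ i ≤ j} : Finset _) :=
    filter_congr fun i _ => (lt_sum_range_succ_iff (hα i) j).trans Fin.le_def.symm
  simp only [IsVPF, IsParking, hfilter]

lemma pairwiseDisjoint_levelBox (x : ℕ → ℕ) (s : Finset (Fin n → Fin n)) :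
    (s : Set (Fin n → Fin n)).PairwiseDisjoint (levelBox x) := by
  intro ℓ _ ℓ' _ hne
  refine disjoint_left.2 fun α hα hα' => hne (funext fun i => ?_)
  rw [levelBox, Fintype.mem_piFinset] at hα hα'
  have h := fun k => (lt_sum_range_succ_iff (hα i) k).symm.trans (lt_sum_range_succ_iff (hα' i) k)
  exact Fin.ext (le_antisymm ((h _).2 le_rfl) ((h _).1 le_rfl))

lemma lt_sum_range_of_isVPF {α : Fin n → ℕ} (hα : IsVPF n x α) (i : Fin n) :
    α i < ∑ k ∈ range n, x k := by
  have hn : n - 1 + 1 = n := Nat.sub_add_cancel i.pos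
  have h := hα ⟨n - 1, by omega⟩
  simp only [hn] at h
  have huniv : ({i | α i < ∑ k ∈ range n, x k} : Finset (Fin n)) = univ :=
    eq_univ_of_card _ (le_antisymm (card_le_univ _) (by simpa using h))
  have hi := mem_univ i
  rw [← huniv, mem_filter] at hi
  exact hi.2

lemma setOf_isVPF_eq_biUnion :
    {α | IsVPF n x α} = ↑(({ℓ | IsParking ℓ} : Finset (Fin n → Fin n)).biUnion (levelBox x)) := by
  ext α
  simp only [Set.mem_ofPred_eq, coe_biUnion, coe_filter, mem_univ, true_and, Set.mem_iUnion,
    mem_coe, exists_prop]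
  constructor
  · intro hα
    choose ℓ hℓn hℓ using fun i => exists_mem_Ico_sum_range (lt_sum_range_of_isVPF hα i)
    have hbox : α ∈ levelBox x (fun i => ⟨ℓ i, hℓn i⟩) := Fintype.mem_piFinset.2 hℓ
    exact ⟨_, (isVPF_iff_isParking hbox).1 hα, hbox⟩
  · rintro ⟨ℓ, hℓ, hbox⟩
    exact (isVPF_iff_isParking hbox).2 hℓ

theorem ncard_setOf_isVPF (n : ℕ) (x : ℕ → ℕ) :
    {α | IsVPF n x α}.ncard = ∑ ℓ : Fin n → Fin n with IsParking ℓ, ∏ i, x (ℓ i) := by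
  rw [setOf_isVPF_eq_biUnion, Set.ncard_coe_finset, card_biUnion (pairwiseDisjoint_levelBox x _)]
  simp only [card_levelBox]

end ParkingLevels

section FiberCard

open Equiv

variable {α ι : Type*} [Fintype α] [DecidableEq ι]

def fiberCard (f : α → ι) (i : ι) : ℕ := #{a | f a = i}

lemma fiberCard_eq_card_subtype (f : α → ι) (i : ι) :
    fiberCard f i = Fintype.card {a // f a = i} :=
  (Fintype.card_subtype _).symm

lemma prod_comp_eq_prod_pow_fiberCard {M : Type*} [CommMonoid M] [Fintype ι]
    (x : ι → M) (f : α → ι) : ∏ a, x (f a) = ∏ i, x i ^ fiberCard f i := by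
  rw [← prod_fiberwise univ f fun a => x (f a)]
  refine prod_congr rfl fun i _ => ?_
  rw [fiberCard, ← prod_const]
  exact prod_congr rfl fun a ha => by rw [(mem_filter.1 ha).2]

lemma sum_fiberCard [Fintype ι] (f : α → ι) : ∑ i, fiberCard f i = Fintype.card α :=
  (card_eq_sum_card_fiberwise fun a _ => mem_univ (f a)).symm

lemma fiberCard_comp_perm (f : α → ι) (σ : Perm α) : fiberCard (f ∘ σ) = fiberCard f := by
  funext i
  simp only [fiberCard_eq_card_subtype]
  exact Fintype.card_congr (σ.subtypeEquiv fun _ => Iff.rfl)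

lemma exists_perm_comp_eq {f g : α → ι} (h : fiberCard f = fiberCard g) :
    ∃ σ : Perm α, f ∘ σ = g := by
  have e (i : ι) : {a // g a = i} ≃ {a // f a = i} :=
    Fintype.equivOfCardEq (by simp only [← fiberCard_eq_card_subtype, h])
  exact ⟨ofFiberEquiv e, funext fun a => ofFiberEquiv_map e a⟩

lemma exists_fiberCard_eq [Fintype ι] (d : ι → ℕ) (hd : ∑ i, d i = Fintype.card α) :
    ∃ f : α → ι, fiberCard f = d := by
  let e : α ≃ Σ i, Fin (d i) := Fintype.equivOfCardEq (by simp [hd])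
  refine ⟨fun a => (e a).1, funext fun i => ?_⟩
  rw [fiberCard_eq_card_subtype, ← Fintype.card_fin (d i)]
  exact Fintype.card_congr
    ((e.subtypeEquiv (q := fun s => s.1 = i) fun _ => Iff.rfl).trans (Equiv.sigmaSubtype i))

theorem card_fiberCard_eq_mul_prod_factorial [Fintype ι] [DecidableEq α] (d : ι → ℕ)
    (hd : ∑ i, d i = Fintype.card α) :
    #{f : α → ι | fiberCard f = d} * ∏ i, (d i).factorial = (Fintype.card α).factorial := by
  obtain ⟨f₀, hf₀⟩ := exists_fiberCard_eq d hd
  have hfiber (g : α → ι) (hg : fiberCard g = d) :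
      #{σ : Perm α | f₀ ∘ σ = g} = ∏ i, (d i).factorial := by
    obtain ⟨τ, rfl⟩ := exists_perm_comp_eq (hf₀.trans hg.symm)
    rw [← Fintype.card_subtype, ← hf₀]
    simp only [fiberCard_eq_card_subtype, ← DomMulAct.stabilizer_card]
    refine Fintype.card_congr ((Equiv.mulRight τ⁻¹).subtypeEquiv fun σ => ?_)
    rw [Equiv.coe_mulRight, Perm.coe_mul, Perm.inv_def, ← Function.comp_assoc,
      Equiv.comp_symm_eq]
  rw [← Fintype.card_perm, ← card_univ, card_eq_sum_card_fiberwise (f := fun σ : Perm α => f₀ ∘ σ)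
    (t := {f : α → ι | fiberCard f = d}) fun σ _ => by simp [fiberCard_comp_perm, hf₀],
    sum_congr rfl fun g hg => hfiber g (mem_filter.1 hg).2, sum_const, smul_eq_mul]

end FiberCard

section LukasiewiczPath

def StaysAbove (p : ℕ → ℤ) (u v : ℕ) : Prop :=
  u ≤ v ∧ ∀ w, u < w → w ≤ v → p u ≤ p w

def pathParent (p : ℕ → ℤ) (v : ℕ) : ℕ :=
  Nat.findGreatest (fun u => p u ≤ p v) (v - 1)

variable {p : ℕ → ℤ} {N u v w : ℕ}

lemma StaysAbove.refl (p : ℕ → ℤ) (u : ℕ) : StaysAbove p u u :=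
  ⟨le_rfl, fun _ h h' => absurd h (not_lt.2 h')⟩

lemma StaysAbove.trans (huv : StaysAbove p u v) (hvw : StaysAbove p v w) : StaysAbove p u w := by
  refine ⟨huv.1.trans hvw.1, fun t hut htw => ?_⟩
  rcases le_or_gt t v with htv | hvt
  · exact huv.2 t hut htv
  · rcases huv.1.eq_or_lt with rfl | hlt
    · exact hvw.2 t hvt htw
    · exact (huv.2 v hlt le_rfl).trans (hvw.2 t hvt htw)

lemma StaysAbove.of_le (h : StaysAbove p u v) (huw : u ≤ w) (hwv : w ≤ v) : StaysAbove p u w :=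
  ⟨huw, fun t hut htw => h.2 t hut (htw.trans hwv)⟩

@[simp]
lemma pathParent_zero (p : ℕ → ℤ) : pathParent p 0 = 0 := rfl

lemma pathParent_le (p : ℕ → ℤ) (v : ℕ) : pathParent p v ≤ v :=
  (Nat.findGreatest_le _).trans (Nat.sub_le v 1)

lemma pathParent_lt (hv : 0 < v) : pathParent p v < v :=
  (Nat.findGreatest_le _).trans_lt (Nat.sub_lt hv one_pos)

lemma path_pathParent_le (h0 : p 0 ≤ p v) : p (pathParent p v) ≤ p v :=
  Nat.findGreatest_spec (P := fun u => p u ≤ p v) (Nat.zero_le _) h0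

lemma lt_path_of_pathParent_lt (hw : pathParent p v < w) (hwv : w < v) : p v < p w :=
  not_le.1 (Nat.findGreatest_is_greatest hw (Nat.le_sub_one_of_lt hwv))

lemma le_pathParent (huv : u < v) (h : p u ≤ p v) : u ≤ pathParent p v :=
  Nat.le_findGreatest (Nat.le_sub_one_of_lt huv) h

lemma StaysAbove.le_pathParent (h : StaysAbove p u v) (huv : u < v) : u ≤ pathParent p v :=
  _root_.le_pathParent huv (h.2 v huv le_rfl)

lemma staysAbove_pathParent (hv : 0 < v) (h0 : p 0 ≤ p v) : StaysAbove p (pathParent p v) v := by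
  refine ⟨pathParent_le p v, fun w hw hwv => ?_⟩
  rcases hwv.eq_or_lt with rfl | hlt
  · exact path_pathParent_le h0
  · exact (path_pathParent_le h0).trans (lt_path_of_pathParent_lt hw hlt).le

lemma path_mem_Icc_of_pathParent_eq (hv : 0 < v) (h0 : p 0 ≤ p v) (hu : pathParent p v = u) :
    p v ∈ Icc (p u) (p (u + 1)) := by
  have huv : u < v := hu ▸ pathParent_lt hv
  refine mem_Icc.2 ⟨hu ▸ path_pathParent_le h0, ?_⟩
  rcases (show u + 1 ≤ v from huv).eq_or_lt with h | h
  · rw [h]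
  · exact (lt_path_of_pathParent_lt (hu ▸ u.lt_succ_self) h).le

lemma strictAntiOn_path_pathParent_eq (u : ℕ) :
    StrictAntiOn p {v | 0 < v ∧ pathParent p v = u} := by
  rintro v ⟨hv, rfl⟩ w ⟨hw, hpar⟩ hvw
  exact lt_path_of_pathParent_lt (hpar ▸ pathParent_lt hv) hvw

lemma staysAbove_iterate_pathParent (h0 : ∀ v ≤ N, p 0 ≤ p v) (k : ℕ) (hv : v ≤ N) :
    StaysAbove p ((pathParent p)^[k] v) v := by
  induction k with
  | zero => exact StaysAbove.refl p v
  | succ k ih =>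
    rw [Function.iterate_succ_apply']
    rcases Nat.eq_zero_or_pos ((pathParent p)^[k] v) with h | h
    · rw [h, pathParent_zero]
      rwa [h] at ih
    · exact (staysAbove_pathParent h (h0 _ (ih.1.trans hv))).trans ih

lemma exists_iterate_pathParent_eq (h : StaysAbove p u v) : ∃ k, (pathParent p)^[k] v = u := by
  induction v using Nat.strong_induction_on with
  | _ v ih =>
    rcases h.1.eq_or_lt with rfl | huv
    · exact ⟨0, rfl⟩
    obtain ⟨k, hk⟩ := ih _ (pathParent_lt (u.zero_le.trans_lt huv))
      (h.of_le (h.le_pathParent huv) (pathParent_le p v))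
    exact ⟨k + 1, hk⟩

end LukasiewiczPath

section LukasiewiczVector

variable {m : ℕ}

def partialSum (d : Fin m → ℕ) (w : ℕ) : ℕ := ∑ i ∈ univ.filter (fun i : Fin m => (i : ℕ) < w), d i

def lukPath (d : Fin m → ℕ) (w : ℕ) : ℤ := partialSum d w - w

def IsLukasiewicz (d : Fin m → ℕ) : Prop := ∀ j : Fin m, (j : ℕ) + 1 ≤ partialSum d (j + 1)

lemma partialSum_zero (d : Fin m → ℕ) : partialSum d 0 = 0 := by simp [partialSum]

lemma partialSum_succ (d : Fin m → ℕ) {w : ℕ} (hw : w < m) :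
    partialSum d (w + 1) = partialSum d w + d ⟨w, hw⟩ := by
  have : univ.filter (fun i : Fin m => (i : ℕ) < w + 1) =
      insert ⟨w, hw⟩ (univ.filter fun i : Fin m => (i : ℕ) < w) := by
    ext i
    simp only [mem_filter, mem_univ, true_and, mem_insert, Fin.ext_iff]
    omega
  rw [partialSum, partialSum, this, sum_insert (by simp), add_comm]

lemma partialSum_of_le (d : Fin m → ℕ) {w : ℕ} (hw : m ≤ w) : partialSum d w = ∑ i, d i := by
  rw [partialSum, filter_true_of_mem fun i _ => i.isLt.trans_le hw]

lemma lukPath_zero (d : Fin m → ℕ) : lukPath d 0 = 0 := by simp [lukPath, partialSum_zero]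

lemma lukPath_succ (d : Fin m → ℕ) {w : ℕ} (hw : w < m) :
    lukPath d (w + 1) = lukPath d w + d ⟨w, hw⟩ - 1 := by
  simp only [lukPath, partialSum_succ d hw]
  push_cast
  ring

lemma IsLukasiewicz.lukPath_zero_le {d : Fin m → ℕ} (hd : IsLukasiewicz d) {w : ℕ} (hw : w ≤ m) :
    lukPath d 0 ≤ lukPath d w := by
  rw [lukPath_zero, lukPath, sub_nonneg]
  rcases Nat.eq_zero_or_pos w with rfl | hw0
  · simp
  · have := hd ⟨w - 1, by omega⟩
    simp only [Nat.sub_add_cancel hw0] at this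
    exact_mod_cast this

end LukasiewiczVector

section ParkingLukasiewicz

variable {n : ℕ}

lemma card_le_eq_partialSum_fiberCard (ℓ : Fin n → Fin n) (j : Fin n) :
    #{i | ℓ i ≤ j} = partialSum (fiberCard ℓ) (j + 1) := by
  rw [card_eq_sum_card_fiberwise (f := ℓ) (t := univ.filter fun k : Fin n => (k : ℕ) < j + 1),
    partialSum]
  · refine sum_congr rfl fun k hk => ?_
    rw [fiberCard, filter_filter]
    refine congrArg card (filter_congr fun i _ => ?_)
    simp only [mem_filter, mem_univ, true_and] at hk
    exact ⟨fun h => h.2, fun h => ⟨h ▸ Fin.le_def.2 (Nat.le_of_lt_succ hk), h⟩⟩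
  · intro i hi
    simp only [coe_filter, mem_univ, true_and, Set.mem_ofPred_eq] at hi ⊢
    exact Nat.lt_succ_of_le hi

lemma isParking_iff_isLukasiewicz (ℓ : Fin n → Fin n) :
    IsParking ℓ ↔ IsLukasiewicz (fiberCard ℓ) := by
  simp only [IsParking, IsLukasiewicz, card_le_eq_partialSum_fiberCard]

end ParkingLukasiewicz

namespace PlaneTree

variable {n : ℕ} (T : PlaneTree n) {u v w : Fin (n + 1)}

def IsAncestor (u v : Fin (n + 1)) : Prop := ∃ k, T.par^[k] v = u

def degSeq (i : Fin n) : ℕ := outdeg T i.castSucc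

lemma par_injective : Function.Injective (par : PlaneTree n → Fin (n + 1) → Fin (n + 1)) := by
  rintro ⟨_⟩ ⟨_⟩ rfl
  rfl

noncomputable instance : Fintype (PlaneTree n) := Fintype.ofInjective _ par_injective

lemma par_le (v : Fin (n + 1)) : T.par v ≤ v := by
  rcases eq_or_ne v 0 with rfl | hv
  · rw [T.par_zero]
  · exact (T.par_lt v hv).le

lemma isAncestor_refl (v : Fin (n + 1)) : T.IsAncestor v v := ⟨0, rfl⟩

lemma isAncestor_par (v : Fin (n + 1)) : T.IsAncestor (T.par v) v := ⟨1, rfl⟩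

variable {T}

lemma IsAncestor.le (h : T.IsAncestor u v) : u ≤ v := by
  obtain ⟨k, rfl⟩ := h
  induction k with
  | zero => exact le_rfl
  | succ k ih => exact (Function.iterate_succ_apply' T.par k v ▸ T.par_le _).trans ih

lemma IsAncestor.trans (huv : T.IsAncestor u v) (hvw : T.IsAncestor v w) : T.IsAncestor u w := by
  obtain ⟨a, rfl⟩ := huv
  obtain ⟨b, rfl⟩ := hvw
  exact ⟨a + b, Function.iterate_add_apply _ _ _ _⟩

lemma IsAncestor.isAncestor_par (h : T.IsAncestor u v) (huv : u ≠ v) :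
    T.IsAncestor u (T.par v) := by
  obtain ⟨_ | k, rfl⟩ := h
  · exact absurd rfl huv
  · exact ⟨k, rfl⟩

lemma IsAncestor.le_par (h : T.IsAncestor u v) (huv : u ≠ v) : u ≤ T.par v :=
  (h.isAncestor_par huv).le

variable (T) in
lemma isAncestor_zero (v : Fin (n + 1)) : T.IsAncestor 0 v := by
  rcases eq_or_ne v 0 with rfl | hv
  · exact T.isAncestor_refl 0
  · exact (isAncestor_zero (T.par v)).trans (T.isAncestor_par v)
termination_by (v : ℕ)
decreasing_by exact T.par_lt v hv

lemma IsAncestor.of_le (h : T.IsAncestor u v) (huw : u ≤ w) (hwv : w ≤ v) : T.IsAncestor u w := by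
  rcases eq_or_ne u 0 with rfl | hu
  · exact T.isAncestor_zero w
  rcases huw.eq_or_lt with rfl | huw
  · exact T.isAncestor_refl u
  rcases hwv.eq_or_lt with rfl | hwv
  · exact h
  exact T.plane u w v (Fin.pos_of_ne_zero hu) huw hwv h

section

variable (T)

lemma card_par_lt_eq_sum_outdeg (b : ℕ) :
    #{t | t ≠ 0 ∧ (T.par t : ℕ) < b} =
      ∑ i ∈ univ.filter (fun i : Fin (n + 1) => (i : ℕ) < b), outdeg T i := by
  rw [card_eq_sum_card_fiberwise (f := T.par)
    (t := univ.filter fun i : Fin (n + 1) => (i : ℕ) < b)]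
  · refine sum_congr rfl fun i hi => ?_
    rw [outdeg, filter_filter]
    refine congrArg card (filter_congr fun t _ => ?_)
    simp only [mem_filter, mem_univ, true_and] at hi
    exact ⟨fun h => ⟨h.1.1, h.2⟩, fun h => ⟨⟨h.1, h.2 ▸ hi⟩, h.2⟩⟩
  · intro t ht
    simp only [coe_filter, mem_univ, true_and, Set.mem_ofPred_eq] at ht ⊢
    exact ht.2

lemma partialSum_degSeq {b : ℕ} (hb : b ≤ n) :
    partialSum T.degSeq b = #{t | t ≠ 0 ∧ (T.par t : ℕ) < b} := by
  rw [card_par_lt_eq_sum_outdeg, partialSum, sum_filter, sum_filter, Fin.sum_univ_castSucc]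
  simp [degSeq, hb]

lemma le_card_par_lt {b : ℕ} (hb : b ≤ n) : b ≤ #{t | t ≠ 0 ∧ (T.par t : ℕ) < b} := by
  have hsub : Ioc (0 : Fin (n + 1)) ⟨b, by omega⟩ ⊆
      ({t | t ≠ 0 ∧ (T.par t : ℕ) < b} : Finset _) := by
    intro t ht
    rw [mem_Ioc] at ht
    have ht0 : t ≠ 0 := ht.1.ne'
    exact mem_filter.2 ⟨mem_univ t, ht0, (T.par_lt t ht0).trans_le ht.2⟩
  simpa using card_le_card hsub

lemma isLukasiewicz_degSeq : IsLukasiewicz T.degSeq := fun j => by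
  rw [T.partialSum_degSeq j.isLt]
  exact T.le_card_par_lt j.isLt

lemma sum_degSeq : ∑ i, T.degSeq i = n := by
  rw [← partialSum_of_le _ le_rfl, T.partialSum_degSeq le_rfl]
  refine le_antisymm ?_ (T.le_card_par_lt le_rfl)
  calc #{t | t ≠ 0 ∧ (T.par t : ℕ) < n} ≤ #(univ.erase (0 : Fin (n + 1))) :=
        card_le_card fun t ht => mem_erase.2 ⟨(mem_filter.1 ht).2.1, mem_univ t⟩
    _ = n := by simp

lemma lukPath_degSeq {b : ℕ} (hb : b ≤ n) :
    lukPath T.degSeq b = #{t | t ≠ 0 ∧ (T.par t : ℕ) < b} - b := by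
  rw [lukPath, T.partialSum_degSeq hb]

end

/-- Each of the `w - u` vertices in `(u, w]` is a descendant of `u` other than `u`, hence a child
of some vertex of `[u, w)`. -/
lemma IsAncestor.staysAbove (h : T.IsAncestor u v) : StaysAbove (lukPath T.degSeq) u v := by
  refine ⟨h.le, fun w huw hwv => ?_⟩
  have hwn : w ≤ n := hwv.trans (Nat.le_of_lt_succ v.isLt)
  let w' : Fin (n + 1) := ⟨w, by omega⟩
  have hdisj : Disjoint ({t | t ≠ 0 ∧ (T.par t : ℕ) < u} : Finset _) (Ioc u w') := by
    refine disjoint_left.2 fun t ht ht' => ?_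
    rw [mem_Ioc] at ht'
    have := (h.of_le ht'.1.le (ht'.2.trans hwv)).le_par ht'.1.ne
    exact absurd (mem_filter.1 ht).2.2 (not_lt.2 this)
  have hsub : ({t | t ≠ 0 ∧ (T.par t : ℕ) < u} : Finset _) ∪ Ioc u w' ⊆
      ({t | t ≠ 0 ∧ (T.par t : ℕ) < w} : Finset _) := by
    intro t ht
    simp only [mem_union, mem_filter, mem_univ, true_and, mem_Ioc] at ht ⊢
    rcases ht with ⟨ht0, hlt⟩ | ⟨hut, htw⟩
    · exact ⟨ht0, hlt.trans huw⟩
    · have ht0 : t ≠ 0 := (Fin.zero_le u).trans_lt hut |>.ne'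
      exact ⟨ht0, (T.par_lt t ht0).trans_le htw⟩
  have hcard := card_le_card hsub
  rw [card_union_of_disjoint hdisj, Fin.card_Ioc] at hcard
  rw [T.lukPath_degSeq (huw.le.trans hwn), T.lukPath_degSeq hwn]
  simp only [w'] at hcard
  omega

/-- If `r` is the last descendant of `u`, the children of `[u, r]` are the `r - u` descendants
in `(u, r]`, so the path drops below its value at `u` at time `r + 1`. -/
lemma isAncestor_of_staysAbove (h : StaysAbove (lukPath T.degSeq) u v) : T.IsAncestor u v := by
  classical
  by_contra hnot
  let D : Finset (Fin (n + 1)) := {t | T.IsAncestor u t}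
  have huD : u ∈ D := mem_filter.2 ⟨mem_univ u, T.isAncestor_refl u⟩
  set r := D.max' ⟨u, huD⟩
  have hr : T.IsAncestor u r := (mem_filter.1 (D.max'_mem _)).2
  have hrv : r < v := lt_of_not_ge fun hvr => hnot (hr.of_le h.1 hvr)
  have hsub : ({t | t ≠ 0 ∧ (T.par t : ℕ) < r + 1} : Finset _) ⊆
      ({t | t ≠ 0 ∧ (T.par t : ℕ) < u} : Finset _) ∪ Ioc u r := by
    intro t ht
    obtain ⟨ht0, htr⟩ := (mem_filter.1 ht).2
    rw [mem_union, mem_filter, mem_Ioc]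
    by_cases htu : (T.par t : ℕ) < u
    · exact Or.inl ⟨mem_univ t, ht0, htu⟩
    · have hpar : T.IsAncestor u (T.par t) :=
        hr.of_le (not_lt.1 htu) (Fin.le_def.2 (Nat.le_of_lt_succ htr))
      have hut : u < t := (not_lt.1 htu).trans_lt (T.par_lt t ht0)
      exact Or.inr ⟨hut, D.le_max' t (mem_filter.2 ⟨mem_univ t, hpar.trans (T.isAncestor_par t)⟩)⟩
  have hcard := (card_le_card hsub).trans (card_union_le _ _)
  have hrn : (r : ℕ) + 1 ≤ n := by have := v.isLt; omega
  have hpath := h.2 (r + 1) (Nat.lt_succ_of_le hr.le) hrv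
  have hur : (u : ℕ) ≤ r := Fin.le_iff_val_le_val.1 hr.le
  rw [T.lukPath_degSeq (by omega), T.lukPath_degSeq hrn] at hpath
  rw [Fin.card_Ioc] at hcard
  omega

variable (T) in
theorem val_par_eq_pathParent (v : Fin (n + 1)) :
    (T.par v : ℕ) = pathParent (lukPath T.degSeq) v := by
  rcases eq_or_ne v 0 with rfl | hv
  · rw [T.par_zero]; rfl
  have hv0 : 0 < (v : ℕ) := Fin.pos_iff_ne_zero.2 hv
  refine le_antisymm ((T.isAncestor_par v).staysAbove.le_pathParent (T.par_lt v hv)) ?_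
  let g : Fin (n + 1) := ⟨pathParent (lukPath T.degSeq) v, (pathParent_le _ _).trans_lt v.isLt⟩
  have hg : T.IsAncestor g v := isAncestor_of_staysAbove <| staysAbove_pathParent hv0 <|
    T.isLukasiewicz_degSeq.lukPath_zero_le (Nat.le_of_lt_succ v.isLt)
  exact hg.le_par (Fin.ne_of_lt (pathParent_lt hv0))

theorem degSeq_injective : Function.Injective (degSeq : PlaneTree n → Fin n → ℕ) := by
  intro T T' h
  refine par_injective (funext fun v => Fin.ext ?_)
  rw [val_par_eq_pathParent, val_par_eq_pathParent, h]

def lukParent (d : Fin n → ℕ) (v : Fin (n + 1)) : Fin (n + 1) :=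
  ⟨pathParent (lukPath d) v, (pathParent_le _ _).trans_lt v.isLt⟩

lemma val_iterate_lukParent (d : Fin n → ℕ) (k : ℕ) (v : Fin (n + 1)) :
    ((lukParent d)^[k] v : ℕ) = (pathParent (lukPath d))^[k] v :=
  Function.Semiconj.iterate_right (f := Fin.val) (ga := lukParent d)
    (gb := pathParent (lukPath d)) (fun _ => rfl) k v

lemma exists_iterate_lukParent_eq_iff {d : Fin n → ℕ} (hd : IsLukasiewicz d) :
    (∃ k, (lukParent d)^[k] v = u) ↔ StaysAbove (lukPath d) u v := by
  simp only [Fin.ext_iff, val_iterate_lukParent]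
  constructor
  · rintro ⟨k, hk⟩
    exact hk ▸ staysAbove_iterate_pathParent (fun _ => hd.lukPath_zero_le) k
      (Nat.le_of_lt_succ v.isLt)
  · exact exists_iterate_pathParent_eq

def ofLukasiewicz (d : Fin n → ℕ) (hd : IsLukasiewicz d) : PlaneTree n where
  par := lukParent d
  par_zero := Fin.ext (pathParent_zero (lukPath d))
  par_lt _ hv := pathParent_lt (Fin.pos_iff_ne_zero.2 hv)
  plane i j k _ hij hjk hik := by
    rw [exists_iterate_lukParent_eq_iff hd] at hik ⊢
    exact hik.of_le hij.le hjk.le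

/-- The children of `u` have strictly decreasing path values in
`[lukPath d u, lukPath d (u + 1)]`, an interval of `d u` integers; equality follows from `∑ d = n`.
-/
theorem degSeq_ofLukasiewicz {d : Fin n → ℕ} (hd : IsLukasiewicz d) (hsum : ∑ i, d i = n) :
    (ofLukasiewicz d hd).degSeq = d := by
  have hle (j : Fin n) : (ofLukasiewicz d hd).degSeq j ≤ d j := by
    have hcard : #(Icc (lukPath d j) (lukPath d (j + 1))) = d j := by
      rw [Int.card_Icc, lukPath_succ d j.isLt, Fin.eta]
      omega
    rw [← hcard, degSeq, outdeg]
    refine card_le_card_of_injOn (fun t => lukPath d t) (fun t ht => ?_) ?_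
    · obtain ⟨ht0, hpar⟩ := (mem_filter.1 ht).2
      exact path_mem_Icc_of_pathParent_eq (Fin.pos_iff_ne_zero.2 ht0)
        (hd.lukPath_zero_le (Nat.le_of_lt_succ t.isLt)) (congrArg Fin.val hpar)
    · refine (strictAntiOn_path_pathParent_eq (p := lukPath d) (j : ℕ)).injOn.comp
        Fin.val_injective.injOn fun t ht => ?_
      obtain ⟨ht0, hpar⟩ := (mem_filter.1 ht).2
      exact ⟨Fin.pos_iff_ne_zero.2 ht0, congrArg Fin.val hpar⟩
  funext j
  exact (sum_eq_sum_iff_of_le fun j _ => hle j).1 (by rw [sum_degSeq, hsum]) j (mem_univ j)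

theorem exists_degSeq_eq {d : Fin n → ℕ} (hd : IsLukasiewicz d) (hsum : ∑ i, d i = n) :
    ∃ T : PlaneTree n, T.degSeq = d :=
  ⟨ofLukasiewicz d hd, degSeq_ofLukasiewicz hd hsum⟩

end PlaneTree

lemma cast_card_fiberCard_eq {n : ℕ} (d : Fin n → ℕ) (hd : ∑ i, d i = n) :
    (#{ℓ : Fin n → Fin n | fiberCard ℓ = d} : ℚ) = n.factorial / ∏ i, ((d i).factorial : ℚ) := by
  have h := card_fiberCard_eq_mul_prod_factorial (α := Fin n) d (by rw [hd, Fintype.card_fin])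
  rw [Fintype.card_fin] at h
  rw [eq_div_iff (by positivity), ← h]
  push_cast
  rfl

theorem sum_isParking_eq_sum_planeTree (n : ℕ) (x : ℕ → ℕ) :
    ∑ ℓ : Fin n → Fin n with IsParking ℓ, ∏ i, x (ℓ i) =
      ∑ T : PlaneTree n, #{ℓ : Fin n → Fin n | fiberCard ℓ = T.degSeq} *
        ∏ i : Fin n, x i ^ T.degSeq i := by
  have hmaps : ∀ ℓ ∈ ({ℓ | IsParking ℓ} : Finset (Fin n → Fin n)),
      fiberCard ℓ ∈ univ.image PlaneTree.degSeq := fun ℓ hℓ => by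
    obtain ⟨T, hT⟩ := PlaneTree.exists_degSeq_eq
      ((isParking_iff_isLukasiewicz ℓ).1 (mem_filter.1 hℓ).2) (by simp [sum_fiberCard])
    exact mem_image.2 ⟨T, mem_univ T, hT⟩
  rw [← sum_fiberwise_of_maps_to hmaps, sum_image fun T _ T' _ h => PlaneTree.degSeq_injective h]
  refine sum_congr rfl fun T _ => ?_
  have hfilter : ({ℓ | IsParking ℓ} : Finset (Fin n → Fin n)).filter
      (fun ℓ => fiberCard ℓ = T.degSeq) =
        ({ℓ | fiberCard ℓ = T.degSeq} : Finset (Fin n → Fin n)) := by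
    rw [filter_filter]
    refine filter_congr fun ℓ _ => and_iff_right_of_imp fun h => ?_
    rw [isParking_iff_isLukasiewicz, h]
    exact T.isLukasiewicz_degSeq
  rw [hfilter, ← smul_eq_mul, ← sum_const]
  refine sum_congr rfl fun ℓ hℓ => ?_
  rw [prod_comp_eq_prod_pow_fiberCard (fun j : Fin n => x j), (mem_filter.1 hℓ).2]

theorem stmt4_general (n : ℕ) (x : ℕ → ℕ) :
    (Set.ncard {α : Fin n → ℕ | IsVPF n x α} : ℚ) =
      (Nat.factorial n : ℚ) *
        ∑ᶠ T : PlaneTree n, ∏ i : Fin n,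
          (x (i : ℕ) : ℚ) ^ outdeg T i.castSucc /
            (Nat.factorial (outdeg T i.castSucc) : ℚ) := by
  rw [ncard_setOf_isVPF, sum_isParking_eq_sum_planeTree, finsum_eq_sum_of_fintype, mul_sum]
  push_cast
  refine sum_congr rfl fun T _ => ?_
  rw [cast_card_fiberCard_eq _ T.sum_degSeq, prod_div_distrib]
  simp only [PlaneTree.degSeq]
  ring

/-- The number of `x`-parking functions equals
`n! ∑_{T ∈ RPT(n+1)} ∏_{i=1}^{n} x_i^{outdeg_T(i−1)} / (outdeg_T(i−1)!)`,
as rational numbers. -/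
theorem stmt4 (n : ℕ) (hn : 1 ≤ n) (x : ℕ → ℕ) :
    (Set.ncard {α : Fin n → ℕ | IsVPF n x α} : ℚ) =
      (Nat.factorial n : ℚ) *
        ∑ᶠ T : PlaneTree n, ∏ i : Fin n,
          (x (i : ℕ) : ℚ) ^ outdeg T i.castSucc /
            (Nat.factorial (outdeg T i.castSucc) : ℚ) :=
  stmt4_general n x
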